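/- arXiv:1706.01147 — 2 statements merged into one kernel-verified Lean document; each statement's English description precedes it below -/
import Mathlib

section
/- Fix k ≥ 3. The algebra (Aₖ, w^A), where Aₖ is the set of k-wnu normal forms and w^A the normal-form operation, satisfies the k-wnu identities: w^A(a,…,a) = a for all a ∈ Aₖ, and for all distinct a, b ∈ Aₖ the value of w^A on any tuple consisting of one b and k−1 copies of a is the same regardless of the position of b. -/
/-- Formal terms built from variables in `V` and a single `k`-ary operation symbol `w`. -/
inductive TermK (k : ℕ) (V : Type) : Type
  | var : V → TermK k V
  | w : (Fin k → TermK k V) → TermK k V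

/-- Evaluation of a term in an algebra `(B, f)` under a variable assignment `σ`. -/
def TermK.eval {k : ℕ} {V B : Type} (f : (Fin k → B) → B) (σ : V → B) : TermK k V → B
  | .var v => σ v
  | .w ts => f (fun i => (ts i).eval f σ)

/-- Renaming/substitution of variables in a term. -/
def TermK.rename {k : ℕ} {V V' : Type} (ρ : V → V') : TermK k V → TermK k V'
  | .var v => .var (ρ v)
  | .w ts => .w (fun i => (ts i).rename ρ)

/-- A `k`-ary operation `f` satisfies the `k`-wnu identities: `f(x,…,x) = x` and
the value of `f` on a tuple with a single `y` among `x`'s does not depend on the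
position of the `y`. -/
def IsKWNU {k : ℕ} {B : Type} (f : (Fin k → B) → B) : Prop :=
  (∀ x, f (fun _ => x) = x) ∧
  ∀ (x y : B) (i j : Fin k),
    f (Function.update (fun _ => x) i y) = f (Function.update (fun _ => x) j y)

/-- Two terms are equal modulo the equational theory generated by the `k`-wnu identities,
i.e. they evaluate equally in every algebra satisfying the `k`-wnu identities. -/
def EqWnuK {k : ℕ} {V : Type} (t s : TermK k V) : Prop :=
  ∀ (B : Type) (f : (Fin k → B) → B) (σ : V → B), IsKWNU f → t.eval f σ = s.eval f σ

/-- The set `Aₖ` of `k`-wnu normal forms (over the countably infinite variable set `ℕ`):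
every variable is a normal form, and `w(a₁,…,aₖ)` is a normal form whenever
`a₁,…,aₖ` are normal forms and there are two distinct indices `i, j` with
`a₁ ≠ aᵢ` and `a₁ ≠ aⱼ`. -/
inductive IsNFK {k : ℕ} [NeZero k] : TermK k ℕ → Prop
  | var (n : ℕ) : IsNFK (.var n)
  | w (ts : Fin k → TermK k ℕ) : (∀ i, IsNFK (ts i)) →
      (∃ i j : Fin k, i ≠ j ∧ ts 0 ≠ ts i ∧ ts 0 ≠ ts j) → IsNFK (.w ts)

open Classical in
/-- The normal-form operation `w^A` on `k`-ary terms: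
`w^A(a,…,a) = a`; if some coordinate is `c` and all the others equal `d ≠ c` then the
value is `w(c,d,…,d)`; otherwise `w^A(a₁,…,aₖ) = w(a₁,…,aₖ)`. -/
noncomputable def wAK {k : ℕ} [NeZero k] (ts : Fin k → TermK k ℕ) : TermK k ℕ :=
  if ∀ i, ts i = ts 0 then ts 0
  else if h : ∃ icd : Fin k × TermK k ℕ × TermK k ℕ,
      icd.2.1 ≠ icd.2.2 ∧ ∀ j, ts j = if j = icd.1 then icd.2.1 else icd.2.2 then
    TermK.w (fun l => if l = 0 then h.choose.2.1 else h.choose.2.2)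
  else TermK.w ts

/-- The subterm relation `⪯` on `k`-wnu normal forms: the reflexive transitive closure of
`{(a,b) : a,b ∈ Aₖ, ∃ c₁,…,cₖ ∈ Aₖ, b = w(c₁,…,cₖ) ∧ a ∈ {c₁,…,cₖ}}`. -/
def SubK {k : ℕ} [NeZero k] (a b : TermK k ℕ) : Prop :=
  Relation.ReflTransGen
    (fun s t => IsNFK s ∧ IsNFK t ∧ ∃ cs : Fin k → TermK k ℕ,
      (∀ i, IsNFK (cs i)) ∧ t = .w cs ∧ ∃ i, s = cs i) a b

lemma exists_ne_ne {k : ℕ} (hk : 3 ≤ k) (i i' : Fin k) : ∃ j : Fin k, j ≠ i ∧ j ≠ i' := by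
  have hcard : ({i, i'} : Finset (Fin k)).card < (Finset.univ : Finset (Fin k)).card := by
    have h1 : ({i, i'} : Finset (Fin k)).card ≤ 2 :=
      (Finset.card_insert_le _ _).trans (by simp)
    simp only [Finset.card_univ, Fintype.card_fin]
    omega
  have hne : (({i, i'} : Finset (Fin k))ᶜ).Nonempty := by
    rw [← Finset.card_pos, Finset.card_compl]
    simp only [Finset.card_univ, Fintype.card_fin] at hcard ⊢
    omega
  obtain ⟨j, hj⟩ := hne
  simp only [Finset.mem_compl, Finset.mem_insert, Finset.mem_singleton, not_or] at hj
  exact ⟨j, hj.1, hj.2⟩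

lemma wAK_update {k : ℕ} [NeZero k] (hk : 3 ≤ k) (a b : TermK k ℕ) (hab : a ≠ b)
    (i : Fin k) :
    wAK (Function.update (fun _ => a) i b) = .w (fun l => if l = 0 then b else a) := by
  set ts := Function.update (fun _ : Fin k => a) i b with htsdef
  have hts' : ∀ j, ts j = if j = i then b else a := fun j => Function.update_apply _ _ _ _
  have hnot : ¬ ∀ j, ts j = ts 0 := by
    intro h
    by_cases h0 : (0 : Fin k) = i
    · obtain ⟨j, hj1, hj2⟩ := exists_ne_ne hk i 0
      have := h j
      rw [hts' j, hts' 0, if_pos h0, if_neg hj1] at this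
      exact hab this
    · have := h i
      rw [hts' i, hts' 0, if_pos rfl, if_neg h0] at this
      exact hab this.symm
  have hex : ∃ icd : Fin k × TermK k ℕ × TermK k ℕ,
      icd.2.1 ≠ icd.2.2 ∧ ∀ j, ts j = if j = icd.1 then icd.2.1 else icd.2.2 :=
    ⟨(i, b, a), fun h => hab h.symm, hts'⟩
  unfold wAK
  rw [if_neg hnot, dif_pos hex]
  obtain ⟨hcd, hspec⟩ := hex.choose_spec
  set i' := hex.choose.1 with hi'
  set c := hex.choose.2.1 with hc'
  set d := hex.choose.2.2 with hd'
  obtain ⟨j, hji, hji'⟩ := exists_ne_ne hk i i'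
  have hd : d = a := by
    have := hspec j
    rw [hts' j, if_neg hji, if_neg hji'] at this
    exact this.symm
  have hii' : i = i' := by
    by_contra h
    have := hspec i
    rw [hts' i, if_pos rfl, if_neg h] at this
    exact hab (hd ▸ this).symm
  have hc : c = b := by
    have := hspec i
    rw [hts' i, if_pos rfl, if_pos hii'] at this
    exact this.symm
  rw [hc, hd]

/-- Fix `k ≥ 3`. The algebra `(Aₖ, w^A)` of `k`-wnu normal forms
satisfies the `k`-wnu identities: `w^A(a,…,a) = a` for all `a ∈ Aₖ`, and for distinct
`a, b ∈ Aₖ` the value of `w^A` on a tuple consisting of one `b` and `k−1` copies of `a`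
is the same regardless of the position of the `b`. -/
theorem statement15 {k : ℕ} [NeZero k] (hk : 3 ≤ k) :
    (∀ a : TermK k ℕ, IsNFK a → wAK (fun _ => a) = a) ∧
    (∀ a b : TermK k ℕ, IsNFK a → IsNFK b → a ≠ b → ∀ i j : Fin k,
      wAK (Function.update (fun _ => a) i b) = wAK (Function.update (fun _ => a) j b)) := by
  constructor
  · intro a _
    simp [wAK]
  · intro a b _ _ hab i j
    rw [wAK_update hk a b hab i, wAK_update hk a b hab j]
end

section
/- Fix k ≥ 3. The set Sₖ = {(a,b) ∈ Aₖ² : neither a ⪯ b nor b ⪯ a} is a subuniverse of (Aₖ, w^A)²: whenever (a₁,b₁),…,(aₖ,bₖ) ∈ Sₖ, also (w^A(a₁,…,aₖ), w^A(b₁,…,bₖ)) ∈ Sₖ. -/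
/-- The relation `Sₖ = {(a,b) ∈ Aₖ² : neither a ⪯ b nor b ⪯ a}`. -/
def SK {k : ℕ} [NeZero k] (a b : TermK k ℕ) : Prop :=
  IsNFK a ∧ IsNFK b ∧ ¬ SubK a b ∧ ¬ SubK b a

def SubKStep {k : ℕ} [NeZero k] (s t : TermK k ℕ) : Prop :=
  IsNFK s ∧ IsNFK t ∧ ∃ cs : Fin k → TermK k ℕ, (∀ i, IsNFK (cs i)) ∧ t = .w cs ∧ ∃ i, s = cs i

def IsOddOneOut {k : ℕ} (ts : Fin k → TermK k ℕ) (i : Fin k) (c d : TermK k ℕ) : Prop :=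
  c ≠ d ∧ ∀ j, ts j = if j = i then c else d

namespace IsOddOneOut

variable {k : ℕ} {ts : Fin k → TermK k ℕ} {i : Fin k} {c d : TermK k ℕ}

lemma of_eq_ite (hcd : c ≠ d) : IsOddOneOut (fun l => if l = i then c else d) i c d :=
  ⟨hcd, fun _ => rfl⟩

lemma exists_ne_apply_eq (hk : 2 ≤ k) (h : IsOddOneOut ts i c d) : ∃ j, j ≠ i ∧ ts j = d := by
  have := Fin.nontrivial_iff_two_le.2 hk
  obtain ⟨j, hj⟩ := exists_ne i
  exact ⟨j, hj, by rw [h.2 j, if_neg hj]⟩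

lemma isNFK_left_right [NeZero k] (hk : 2 ≤ k) (h : IsOddOneOut ts i c d)
    (hts : ∀ i, IsNFK (ts i)) : IsNFK c ∧ IsNFK d := by
  obtain ⟨j, -, hj⟩ := h.exists_ne_apply_eq hk
  refine ⟨?_, hj ▸ hts j⟩
  simpa [h.2 i] using hts i

end IsOddOneOut

lemma SK.symm {k : ℕ} [NeZero k] {a b : TermK k ℕ} (h : SK a b) : SK b a :=
  ⟨h.2.1, h.1, h.2.2.2, h.2.2.1⟩

section wAK

variable {k : ℕ} [NeZero k]

@[simp]
lemma subK_refl (a : TermK k ℕ) : SubK a a :=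
  .refl

lemma wAK_cases (ts : Fin k → TermK k ℕ) :
    ((∀ i, ts i = ts 0) ∧ wAK ts = ts 0) ∨
    (∃ i c d, IsOddOneOut ts i c d ∧ wAK ts = .w (fun l => if l = 0 then c else d)) ∨
    ((¬ ∀ i, ts i = ts 0) ∧ (∀ i c d, ¬ IsOddOneOut ts i c d) ∧ wAK ts = .w ts) := by
  unfold wAK
  split_ifs with hconst hodd
  · exact Or.inl ⟨hconst, rfl⟩
  · exact Or.inr (Or.inl ⟨_, _, _, hodd.choose_spec, rfl⟩)
  · exact Or.inr (Or.inr ⟨hconst, fun i c d h => hodd ⟨(i, c, d), h⟩, rfl⟩)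

lemma wAK_eq_of_forall_eq {ts : Fin k → TermK k ℕ} (h : ∀ i, ts i = ts 0) : wAK ts = ts 0 := by
  simp [wAK, h]

lemma isNFK_wAK (hk : 3 ≤ k) {ts : Fin k → TermK k ℕ} (hts : ∀ i, IsNFK (ts i)) :
    IsNFK (wAK ts) := by
  rcases wAK_cases ts with ⟨-, he⟩ | ⟨i, c, d, hodd, he⟩ | ⟨hconst, hnot, he⟩ <;> rw [he]
  · exact hts 0
  · obtain ⟨hc, hd⟩ := hodd.isNFK_left_right (by omega) hts
    refine .w _ (fun l => by split_ifs <;> assumption) ⟨⟨1, by omega⟩, ⟨2, by omega⟩, ?_⟩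
    simp [Fin.ext_iff, hodd.1]
  · refine .w _ hts ?_
    push Not at hconst
    obtain ⟨i, hi⟩ := hconst
    -- a second coordinate differing from `ts 0` exists, or `ts` would be odd-one-out at `i`
    by_contra! hsingle
    refine hnot i (ts i) (ts 0) ⟨hi, fun j => ?_⟩
    by_cases hji : j = i
    · simp [hji]
    · rw [if_neg hji]; exact (hsingle i j (Ne.symm hji) (Ne.symm hi)).symm

lemma subK_wAK (hk : 3 ≤ k) {ts : Fin k → TermK k ℕ} (hts : ∀ i, IsNFK (ts i)) (j : Fin k) :
    SubK (ts j) (wAK ts) := by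
  rcases wAK_cases ts with ⟨hconst, he⟩ | ⟨i, c, d, hodd, he⟩ | ⟨-, -, he⟩
  · simp [he, ← hconst j]
  · obtain ⟨hc, hd⟩ := hodd.isNFK_left_right (by omega) hts
    refine .single ⟨hts j, isNFK_wAK hk hts, _, fun l => by split_ifs <;> assumption, he,
      if j = i then 0 else ⟨1, by omega⟩, ?_⟩
    by_cases hji : j = i <;> simp [hodd.2, hji, Fin.ext_iff]
  · exact .single ⟨hts j, isNFK_wAK hk hts, ts, hts, he, j, rfl⟩

lemma exists_subK_of_subKStep_wAK (hk : 2 ≤ k) {ts : Fin k → TermK k ℕ} {c : TermK k ℕ}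
    (hstep : SubKStep c (wAK ts)) : ∃ m, SubK c (ts m) := by
  rcases wAK_cases ts with ⟨-, he⟩ | ⟨i, c, d, hodd, he⟩ | ⟨-, -, he⟩
  · exact ⟨0, .single (he ▸ hstep)⟩
  all_goals
    obtain ⟨-, -, cs, -, hcs, l, rfl⟩ := hstep
    rw [he, TermK.w.injEq] at hcs
    subst hcs
  · by_cases hl : l = 0
    · exact ⟨i, by simp [hl, hodd.2 i]⟩
    · obtain ⟨j, -, hj⟩ := hodd.exists_ne_apply_eq hk
      exact ⟨j, by simp [hl, hj]⟩
  · exact ⟨l, subK_refl _⟩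

lemma exists_eq_of_wAK_eq (hk : 3 ≤ k) {as bs : Fin k → TermK k ℕ}
    (has : ¬ ∀ i, as i = as 0) (hbs : ¬ ∀ i, bs i = bs 0) (he : wAK as = wAK bs) :
    ∃ j, as j = bs j := by
  rcases wAK_cases as with ⟨has', -⟩ | ⟨ia, ca, da, hodda, hea⟩ | ⟨-, hnota, hea⟩
  · exact absurd has' has
  all_goals rcases wAK_cases bs with ⟨hbs', -⟩ | ⟨ib, cb, db, hoddb, heb⟩ | ⟨-, hnotb, heb⟩
  all_goals first | exact absurd hbs' hbs | rw [hea, heb, TermK.w.injEq] at he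
  · obtain ⟨j, hja, hjb⟩ := Fin.exists_ne_and_ne_of_two_lt ia ib hk
    have hd : da = db := by simpa [Fin.ext_iff] using congrFun he ⟨1, by omega⟩
    exact ⟨j, by rw [hodda.2 j, hoddb.2 j, if_neg hja, if_neg hjb, hd]⟩
  · exact absurd (he ▸ IsOddOneOut.of_eq_ite hodda.1) (hnotb 0 ca da)
  · exact absurd (he ▸ IsOddOneOut.of_eq_ite hoddb.1) (hnota 0 cb db)
  · exact ⟨0, congrFun he 0⟩

lemma wAK_ne_wAK (hk : 3 ≤ k) {as bs : Fin k → TermK k ℕ} (h : ∀ i, SK (as i) (bs i)) :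
    wAK as ≠ wAK bs := by
  intro he
  by_cases has : ∀ i, as i = as 0
  · refine (h 0).2.2.2 ?_
    rw [← wAK_eq_of_forall_eq has, he]
    exact subK_wAK hk (fun i => (h i).2.1) 0
  by_cases hbs : ∀ i, bs i = bs 0
  · refine (h 0).2.2.1 ?_
    rw [← wAK_eq_of_forall_eq hbs, ← he]
    exact subK_wAK hk (fun i => (h i).1) 0
  obtain ⟨j, hj⟩ := exists_eq_of_wAK_eq hk has hbs he
  exact (h j).2.2.1 (hj ▸ subK_refl _)

lemma not_subK_wAK (hk : 3 ≤ k) {as bs : Fin k → TermK k ℕ} (h : ∀ i, SK (as i) (bs i)) :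
    ¬ SubK (wAK as) (wAK bs) := by
  intro hsub
  rcases hsub.cases_tail with he | ⟨c, hc, hstep⟩
  · exact wAK_ne_wAK hk h he.symm
  · obtain ⟨m, hm⟩ := exists_subK_of_subKStep_wAK (by omega) hstep
    exact (h m).2.2.1 ((subK_wAK hk (fun i => (h i).1) m).trans (hc.trans hm))

end wAK

/-- Fix `k ≥ 3`. The set `Sₖ` is a subuniverse of `(Aₖ, w^A)²`: whenever
`(a₁,b₁),…,(aₖ,bₖ) ∈ Sₖ`, also `(w^A(a₁,…,aₖ), w^A(b₁,…,bₖ)) ∈ Sₖ`. -/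
theorem statement17 {k : ℕ} [NeZero k] (hk : 3 ≤ k)
    (as bs : Fin k → TermK k ℕ) (h : ∀ i, SK (as i) (bs i)) :
    SK (wAK as) (wAK bs) :=
  ⟨isNFK_wAK hk fun i => (h i).1, isNFK_wAK hk fun i => (h i).2.1,
    not_subK_wAK hk h, not_subK_wAK hk fun i => (h i).symm⟩
end
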